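/- Let μ = (μ₁,…,μ_s) be a partition with s ≥ 2, and let 2 ≤ i ≤ s with μ_{i-1} > μ_i. Then f(μ↑_i) − f(μ) ≥ f(μ↑_i − 1̂) > 0, where μ↑_i increases the i-th part of μ by 1 and ν − 1̂ subtracts 1 from each part (deleting zeros). -/

import Mathlib

/-!
Split off the last part, `μ = ν ++ [m]`, and induct on the length. If the raised part is the
last one, Pascal's rule `C(m+1,k) = C(m,k) + C(m,k-1)` and the monotonicity of `(2k-1)!!`
compare the two recursion sums directly. Otherwise raising the `i`-th part commutes with
splitting off `m`, and with subtracting `k̂` for `k < μ_i`; the induction hypothesis for `ν` and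
for each `ν - k̂` bounds the recursion sum of `f(μ↑ᵢ) - f(μ)` termwise from below by that of
`f(μ↑ᵢ - 1̂)`, using `C(m-1,k) ≤ C(m,k)` and `f ≥ 0`.
-/

/-- The odd double factorial `(2k-1)!! = 1 * 3 * ... * (2k-1)`, with `odf 0 = 1`. -/
def odf (k : Nat) : Int := ∏ j ∈ Finset.Icc 1 k, (2 * (j : Int) - 1)

/-- Subtract `k` from every part, deleting parts that become zero. -/
def subHat (k : Nat) (l : List Nat) : List Nat :=
  (l.map (fun x => x - k)).filter (fun x => x ≠ 0)

/-- `l` is a partition: a non-increasing list of positive integers. -/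
def IsPartition (l : List Nat) : Prop := l.Chain' (· ≥ ·) ∧ ∀ x ∈ l, 0 < x

/-- Increase the `i`-th part (1-based indexing). -/
def upAt (i : Nat) (l : List Nat) : List Nat := l.set (i - 1) (l.getD (i - 1) 0 + 1)

/-- Decrease the `j`-th part (1-based indexing), deleting it if it becomes zero. -/
def downAt (j : Nat) (l : List Nat) : List Nat :=
  (l.set (j - 1) (l.getD (j - 1) 0 - 1)).filter (fun x => x ≠ 0)

open Finset

lemma odf_one : odf 1 = 1 := rfl

lemma odf_succ (k : ℕ) : odf (k + 1) = odf k * (2 * (k + 1 : ℤ) - 1) := by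
  simp [odf, prod_Icc_succ_top (Nat.le_add_left 1 k)]

lemma odf_pos (k : ℕ) : 0 < odf k := by
  induction k with
  | zero => simp [odf]
  | succ k ih => rw [odf_succ]; exact mul_pos ih (by omega)

lemma odf_le_succ (k : ℕ) : odf k ≤ odf (k + 1) := by
  rw [odf_succ]
  exact le_mul_of_one_le_right (odf_pos k).le (by omega)

def recSum (m : ℕ) (g : ℕ → ℤ) : ℤ := ∑ k ∈ Icc 1 m, (m.choose k : ℤ) * odf k * g k

lemma recSum_eq_sum_range (m : ℕ) (g : ℕ → ℤ) :
    recSum m g = ∑ j ∈ range m, (m.choose (j + 1) : ℤ) * odf (j + 1) * g (j + 1) := by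
  rw [recSum, ← Ico_add_one_right_eq_Icc, sum_Ico_eq_sum_range, Nat.add_sub_cancel]
  simp only [add_comm 1]

lemma recSum_sub (m : ℕ) (g h : ℕ → ℤ) :
    recSum m (fun k => g k - h k) = recSum m g - recSum m h := by
  simp only [recSum, mul_sub, sum_sub_distrib]

lemma recSum_nonneg {g : ℕ → ℤ} (m : ℕ) (hg : ∀ k, 0 ≤ g k) : 0 ≤ recSum m g :=
  sum_nonneg fun k _ => mul_nonneg (mul_nonneg (Nat.cast_nonneg _) (odf_pos k).le) (hg k)

lemma recSum_pos {g : ℕ → ℤ} {m : ℕ} (hm : 1 ≤ m) (hg : ∀ k, 0 ≤ g k) (hg1 : 0 < g 1) :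
    0 < recSum m g := by
  have hterm : (m.choose 1 : ℤ) * odf 1 * g 1 ≤ recSum m g :=
    single_le_sum (f := fun k => (m.choose k : ℤ) * odf k * g k)
      (fun k _ => mul_nonneg (mul_nonneg (Nat.cast_nonneg _) (odf_pos k).le) (hg k))
      (mem_Icc.2 ⟨le_rfl, hm⟩)
  rw [Nat.choose_one_right, odf_one, mul_one] at hterm
  have : (0 : ℤ) < m := by exact_mod_cast hm
  nlinarith

lemma recSum_le_recSum_succ {b c : ℕ → ℤ} {m : ℕ} (hcb : ∀ k ∈ Icc 1 m, c k ≤ b k)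
    (hc : ∀ k, 0 ≤ c k) (hb : 0 ≤ b (m + 1)) : recSum m c ≤ recSum (m + 1) b := by
  rw [recSum, recSum, sum_Icc_succ_top (by omega)]
  have hsum : ∑ k ∈ Icc 1 m, (m.choose k : ℤ) * odf k * c k
      ≤ ∑ k ∈ Icc 1 m, ((m + 1).choose k : ℤ) * odf k * b k := by
    refine sum_le_sum fun k hk => ?_
    have := (odf_pos k).le
    have : (m.choose k : ℤ) ≤ (m + 1).choose k := by exact_mod_cast Nat.choose_le_succ m k
    calc (m.choose k : ℤ) * odf k * c k ≤ ((m + 1).choose k : ℤ) * odf k * c k := by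
          gcongr; exact hc k
      _ ≤ ((m + 1).choose k : ℤ) * odf k * b k := by gcongr; exact hcb k hk
  have := (odf_pos (m + 1)).le
  have : 0 ≤ ((m + 1).choose (m + 1) : ℤ) * odf (m + 1) * b (m + 1) := by positivity
  linarith

lemma le_recSum_succ_sub_recSum {g : ℕ → ℤ} (m : ℕ) (hg : ∀ k, 0 ≤ g k) :
    g 1 + recSum m (fun k => g (k + 1)) ≤ recSum (m + 1) g - recSum m g := by
  -- Pascal's rule turns the difference into `∑_{j ≤ m} C(m,j) (2j+1)!! g(j+1)`.
  have hpascal : recSum (m + 1) g - recSum m g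
      = ∑ j ∈ range (m + 1), (m.choose j : ℤ) * odf (j + 1) * g (j + 1) := by
    have hextend : recSum m g
        = ∑ j ∈ range (m + 1), (m.choose (j + 1) : ℤ) * odf (j + 1) * g (j + 1) := by
      rw [sum_range_succ, Nat.choose_succ_self, recSum_eq_sum_range]
      simp
    rw [recSum_eq_sum_range, hextend, ← sum_sub_distrib]
    refine sum_congr rfl fun j _ => ?_
    rw [Nat.choose_succ_succ', Nat.cast_add]
    ring
  rw [hpascal, sum_range_succ', recSum_eq_sum_range, Nat.choose_zero_right, Nat.cast_one,
    odf_one, one_mul, one_mul, add_comm (g 1)]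
  gcongr with j
  · exact hg _
  · exact odf_le_succ (j + 1)

@[simp] lemma subHat_nil (k : ℕ) : subHat k [] = [] := rfl

@[simp] lemma subHat_append (k : ℕ) (l₁ l₂ : List ℕ) :
    subHat k (l₁ ++ l₂) = subHat k l₁ ++ subHat k l₂ := by
  simp [subHat]

lemma subHat_cons_of_lt {k x : ℕ} (l : List ℕ) (h : k < x) :
    subHat k (x :: l) = (x - k) :: subHat k l := by
  simp [subHat, Nat.sub_ne_zero_of_lt h]

lemma subHat_cons_of_le {k x : ℕ} (l : List ℕ) (h : x ≤ k) : subHat k (x :: l) = subHat k l := by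
  simp [subHat, Nat.sub_eq_zero_of_le h]

lemma subHat_subHat (a b : ℕ) (l : List ℕ) : subHat a (subHat b l) = subHat (a + b) l := by
  induction l with
  | nil => rfl
  | cons x l ih =>
    rcases le_or_gt x b with hxb | hbx
    · rw [subHat_cons_of_le l hxb, ih, subHat_cons_of_le l (by omega)]
    rw [subHat_cons_of_lt l hbx]
    rcases le_or_gt (x - b) a with hxa | hax
    · rw [subHat_cons_of_le _ hxa, ih, subHat_cons_of_le l (by omega)]
    · rw [subHat_cons_of_lt _ hax, ih, subHat_cons_of_lt l (by omega), Nat.sub_sub, Nat.add_comm a]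

lemma subHat_eq_nil {k : ℕ} {l : List ℕ} (h : ∀ x ∈ l, x ≤ k) : subHat k l = [] := by
  simpa [subHat, List.filter_eq_nil_iff, Nat.sub_eq_zero_iff_le] using h

lemma subHat_ne_nil {k x : ℕ} {l : List ℕ} (hx : x ∈ l) (h : k < x) : subHat k l ≠ [] := by
  simpa [subHat, List.filter_eq_nil_iff, Nat.sub_eq_zero_iff_le] using ⟨x, hx, h⟩

lemma length_subHat_le (k : ℕ) (l : List ℕ) : (subHat k l).length ≤ l.length :=
  (List.length_filter_le _ _).trans_eq (List.length_map _)

lemma isPartition_iff_pairwise {l : List ℕ} :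
    IsPartition l ↔ l.Pairwise (· ≥ ·) ∧ ∀ x ∈ l, 0 < x :=
  List.isChain_iff_pairwise.and Iff.rfl

lemma IsPartition.of_append_left {l₁ l₂ : List ℕ} (h : IsPartition (l₁ ++ l₂)) :
    IsPartition l₁ := by
  rw [isPartition_iff_pairwise, List.pairwise_append] at *
  exact ⟨h.1.1, fun x hx => h.2 x (List.mem_append_left _ hx)⟩

lemma IsPartition.subHat {l : List ℕ} (h : IsPartition l) (k : ℕ) : IsPartition (subHat k l) := by
  rw [isPartition_iff_pairwise] at *
  refine ⟨(h.1.map (· - k) fun a b (hab : b ≤ a) => Nat.sub_le_sub_right hab k).filter _,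
    fun x hx => ?_⟩
  simp only [_root_.subHat, List.mem_filter, decide_eq_true_eq] at hx
  omega

lemma IsPartition.le_of_mem_left {l₁ l₂ : List ℕ} {x : ℕ} (h : IsPartition (l₁ ++ x :: l₂))
    {y : ℕ} (hy : y ∈ l₁) : x ≤ y := by
  rw [isPartition_iff_pairwise, List.pairwise_append] at h
  exact h.1.2.2 y hy x List.mem_cons_self

lemma IsPartition.le_of_mem_right {l₁ l₂ : List ℕ} {x : ℕ} (h : IsPartition (l₁ ++ x :: l₂))
    {y : ℕ} (hy : y ∈ l₂) : y ≤ x := by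
  rw [isPartition_iff_pairwise, List.pairwise_append, List.pairwise_cons] at h
  exact h.1.2.1.1 y hy

lemma IsPartition.raise {l₁ l₂ : List ℕ} {x y : ℕ} (h : IsPartition (l₁ ++ y :: x :: l₂))
    (hxy : x < y) : IsPartition (l₁ ++ y :: (x + 1) :: l₂) := by
  rw [isPartition_iff_pairwise] at *
  simp only [List.pairwise_append, List.pairwise_cons, List.mem_append, List.mem_cons] at *
  obtain ⟨⟨hl₁, ⟨hy, hx, hl₂⟩, hcross⟩, hpos⟩ := h
  refine ⟨⟨hl₁, ⟨fun z hz => ?_, fun z hz => ?_, hl₂⟩, fun u hu z hz => ?_⟩, fun z hz => ?_⟩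
  · rcases hz with rfl | hz
    exacts [hxy, hy z (Or.inr hz)]
  · exact Nat.le_succ_of_le (hx z hz)
  · have := hcross u hu y (Or.inl rfl)
    rcases hz with rfl | rfl | hz
    exacts [this, this.trans_lt' hxy, hcross u hu z (Or.inr (Or.inr hz))]
  · rcases hz with hz | rfl | rfl | hz
    exacts [hpos z (Or.inl hz), hpos z (Or.inr (Or.inl rfl)), x.succ_pos,
      hpos z (Or.inr (Or.inr (Or.inr hz)))]

lemma upAt_append_cons (l₁ l₂ : List ℕ) (x : ℕ) :
    upAt (l₁.length + 1) (l₁ ++ x :: l₂) = l₁ ++ (x + 1) :: l₂ := by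
  simp [upAt]

lemma List.exists_eq_append_cons_cons {α : Type*} {l : List α} {i : ℕ} (hi : 2 ≤ i)
    (hil : i ≤ l.length) : ∃ a y x b, l = a ++ y :: x :: b ∧ a.length = i - 2 := by
  obtain ⟨a, r, rfl, ha⟩ : ∃ a r, l = a ++ r ∧ a.length = i - 2 :=
    ⟨_, _, (List.take_append_drop (i - 2) l).symm, by simp; omega⟩
  match r, hil with
  | y :: x :: b, _ => exact ⟨a, y, x, b, rfl, ha⟩
  | [], hil | [_], hil => simp at hil; omega

lemma pos_of_recurrence {d : ℕ → ℤ} (hd0 : d 0 = 1) (hd1 : d 1 = 0)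
    (hd : ∀ n : ℕ, 2 ≤ n → d n = 2 * ((n : ℤ) - 1) * (d (n - 1) + d (n - 2))) {n : ℕ}
    (hn : 2 ≤ n) : 0 < d n := by
  induction n using Nat.strong_induction_on with
  | _ n ih =>
    obtain ⟨k, rfl⟩ : ∃ k, n = k + 2 := ⟨n - 2, by omega⟩
    have hsum : 0 < d (k + 1) + d k := by
      match k with
      | 0 => simp [hd0, hd1]
      | 1 => linarith [ih 2 (by omega) le_rfl, hd1]
      | k + 2 => linarith [ih (k + 3) (by omega) (by omega), ih (k + 2) (by omega) (by omega)]
    rw [hd (k + 2) hn]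
    simp only [Nat.add_sub_cancel, Nat.cast_add]
    exact mul_pos (by omega) hsum

lemma nonneg_of_recurrence {d : ℕ → ℤ} (hd0 : d 0 = 1) (hd1 : d 1 = 0)
    (hd : ∀ n : ℕ, 2 ≤ n → d n = 2 * ((n : ℤ) - 1) * (d (n - 1) + d (n - 2))) (n : ℕ) :
    0 ≤ d n := by
  match n with
  | 0 => simp [hd0]
  | 1 => simp [hd1]
  | n + 2 => exact (pos_of_recurrence hd0 hd1 hd (by omega)).le

def LastPartRecursion (f : List ℕ → ℤ) : Prop :=
  ∀ ν m, ν ≠ [] → IsPartition (ν ++ [m]) → f (ν ++ [m]) = f ν + recSum m fun k => f (subHat k ν)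

lemma lastPartRecursion_of_dropLast {f : List ℕ → ℤ}
    (hfr : ∀ l : List ℕ, IsPartition l → 2 ≤ l.length →
      f l = f l.dropLast + ∑ k ∈ Finset.Icc 1 (l.getLastD 0),
        ((l.getLastD 0).choose k : Int) * odf k * f (subHat k l.dropLast)) :
    LastPartRecursion f := by
  intro ν m hν h
  have hlen : 2 ≤ (ν ++ [m]).length := by
    simpa [Nat.succ_le_iff] using List.length_pos_iff.2 hν
  simpa [recSum] using hfr _ h hlen

namespace LastPartRecursion

variable {f : List ℕ → ℤ} (hf : LastPartRecursion f)
include hf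

lemma apply_subHat_one_append_singleton {ν : List ℕ} {m : ℕ} (hν : ν ≠ [])
    (h : IsPartition (ν ++ [m + 1])) :
    f (subHat 1 (ν ++ [m + 1])) = f (subHat 1 ν) + recSum m fun k => f (subHat (k + 1) ν) := by
  rcases Nat.eq_zero_or_pos m with rfl | hm
  · simp [subHat_cons_of_le, recSum]
  obtain ⟨x, hx⟩ := List.exists_mem_of_ne_nil ν hν
  have hsub : subHat 1 (ν ++ [m + 1]) = subHat 1 ν ++ [m] := by
    simp [subHat_cons_of_lt [] (show 1 < m + 1 by omega)]
  have hmx : m + 1 ≤ x := by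
    simpa using (show IsPartition (ν ++ (m + 1) :: []) from h).le_of_mem_left hx
  rw [hsub, hf _ _ (subHat_ne_nil hx (by omega)) (hsub ▸ h.subHat 1)]
  simp only [subHat_subHat]

lemma nonneg (h0 : 0 ≤ f []) (h1 : ∀ m, 0 ≤ f [m]) : ∀ l, IsPartition l → 0 ≤ f l := by
  intro l
  induction hn : l.length using Nat.strong_induction_on generalizing l with
  | _ n ih =>
    intro hl
    rcases l.eq_nil_or_concat' with rfl | ⟨ν, m, rfl⟩
    · exact h0
    rcases eq_or_ne ν [] with rfl | hν
    · exact h1 m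
    have hlt : ∀ l' : List ℕ, l'.length ≤ ν.length → l'.length < n := fun l' h' => by
      subst hn; simp; omega
    have hν' := hl.of_append_left
    rw [hf ν m hν hl]
    exact add_nonneg (ih _ (hlt ν le_rfl) ν rfl hν')
      (recSum_nonneg m fun k => ih _ (hlt _ (length_subHat_le k ν)) _ rfl (hν'.subHat k))

section

variable (hnonneg : ∀ l, IsPartition l → 0 ≤ f l)
include hnonneg

lemma le_append_one {ν : List ℕ} (hν : ν ≠ []) (h : IsPartition (ν ++ [1])) :
    f ν ≤ f (ν ++ [1]) := by
  rw [hf ν 1 hν h]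
  linarith [recSum_nonneg 1 fun k => hnonneg _ (h.of_append_left.subHat k)]

lemma pos (h0 : 0 < f []) (h1 : ∀ m, 2 ≤ m → 0 < f [m]) :
    ∀ l, IsPartition l → l ≠ [1] → 0 < f l := by
  intro l
  induction l using List.reverseRecOn with
  | nil => exact fun _ _ => h0
  | append_singleton ν m ih =>
    intro hl hne
    have hm := hl.2 m (List.mem_append_right ν (List.mem_singleton_self m))
    rcases eq_or_ne ν [] with rfl | hν
    · exact h1 m (by simp at hne; omega)
    have hν' := hl.of_append_left
    have hsum := recSum_nonneg m fun k => hnonneg _ (hν'.subHat k)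
    rw [hf ν m hν hl]
    rcases eq_or_ne ν [1] with rfl | hν1
    · refine add_pos_of_nonneg_of_pos (hnonneg _ hν')
        (recSum_pos hm (fun k => hnonneg _ (hν'.subHat k)) ?_)
      simpa [subHat_cons_of_le] using h0
    · exact add_pos_of_pos_of_nonneg (ih hν' hν1) hsum

lemma subHat_one_le_sub_last {a : List ℕ} {x : ℕ} (ha : a ≠ []) (h : IsPartition (a ++ [x]))
    (h' : IsPartition (a ++ [x + 1])) :
    f (subHat 1 (a ++ [x + 1])) ≤ f (a ++ [x + 1]) - f (a ++ [x]) := by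
  rw [hf.apply_subHat_one_append_singleton ha h', hf a _ ha h', hf a _ ha h]
  have := le_recSum_succ_sub_recSum x fun k => hnonneg _ (h.of_append_left.subHat k)
  linarith

lemma subHat_one_le_sub_append_singleton {ν ν' : List ℕ} {m : ℕ} (hν : ν ≠ []) (hν' : ν' ≠ [])
    (h : IsPartition (ν ++ [m + 1])) (h' : IsPartition (ν' ++ [m + 1]))
    (hdrop : f (subHat 1 ν') ≤ f ν' - f ν)
    (hstep : ∀ k ∈ Icc 1 m, f (subHat (k + 1) ν') ≤ f (subHat k ν') - f (subHat k ν))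
    (hlast : f (subHat (m + 1) ν) ≤ f (subHat (m + 1) ν')) :
    f (subHat 1 (ν' ++ [m + 1])) ≤ f (ν' ++ [m + 1]) - f (ν ++ [m + 1]) := by
  rw [hf.apply_subHat_one_append_singleton hν' h', hf ν' _ hν' h', hf ν _ hν h]
  have := recSum_le_recSum_succ hstep (fun k => hnonneg _ (h'.of_append_left.subHat (k + 1)))
    (sub_nonneg.2 hlast)
  rw [recSum_sub] at this
  linarith

theorem subHat_one_le_sub (a : List ℕ) (x : ℕ) (b : List ℕ) (ha : a ≠ [])
    (h : IsPartition (a ++ x :: b)) (h' : IsPartition (a ++ (x + 1) :: b)) :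
    f (subHat 1 (a ++ (x + 1) :: b)) ≤ f (a ++ (x + 1) :: b) - f (a ++ x :: b) := by
  induction hn : b.length using Nat.strong_induction_on generalizing a b x with
  | _ n ih =>
  rcases b.eq_nil_or_concat' with rfl | ⟨b, m, rfl⟩
  · exact hf.subHat_one_le_sub_last hnonneg ha h h'
  have hmx : m ≤ x := h.le_of_mem_right (List.mem_append_right b (List.mem_singleton_self m))
  simp only [← List.cons_append, ← List.append_assoc] at h h' ⊢
  obtain ⟨m, rfl⟩ : ∃ m', m = m' + 1 :=
    ⟨m - 1, by have := h.2 m (List.mem_append_right _ (List.mem_singleton_self m)); omega⟩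
  have hμ := h.of_append_left
  have hμ' := h'.of_append_left
  obtain ⟨y, hy⟩ := List.exists_mem_of_ne_nil a ha
  have hxy : x + 1 ≤ y := hμ'.le_of_mem_left hy
  have hsub : ∀ k z, k < z → subHat k (a ++ z :: b) = subHat k a ++ (z - k) :: subHat k b :=
    fun k z hkz => by rw [subHat_append, subHat_cons_of_lt b hkz]
  -- the induction hypothesis for the shorter partition `ν - k̂`, whose part `x - k` is raised
  have hstep : ∀ k, k < x → f (subHat (k + 1) (a ++ (x + 1) :: b))
      ≤ f (subHat k (a ++ (x + 1) :: b)) - f (subHat k (a ++ x :: b)) := by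
    intro k hk
    have hsub' : subHat k (a ++ (x + 1) :: b) = subHat k a ++ (x - k + 1) :: subHat k b := by
      rw [hsub k (x + 1) (by omega), Nat.sub_add_comm hk.le]
    rw [Nat.add_comm k, ← subHat_subHat, hsub', hsub k x hk]
    exact ih _ (by simp at hn; have := length_subHat_le k b; omega) _ _ _
      (subHat_ne_nil hy (by omega)) (hsub k x hk ▸ hμ.subHat k) (hsub' ▸ hμ'.subHat k) rfl
  have hlast : f (subHat (m + 1) (a ++ x :: b)) ≤ f (subHat (m + 1) (a ++ (x + 1) :: b)) := by
    rcases hmx.lt_or_eq with hmx | rfl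
    · linarith [hstep _ hmx, hnonneg _ (hμ'.subHat (m + 1 + 1))]
    -- when the last part equals the raised one, raising only appends a part `1` to `ν - k̂`
    have hb : subHat (m + 1) b = [] := subHat_eq_nil fun z hz => hμ.le_of_mem_right hz
    have hup : subHat (m + 1) (a ++ (m + 1 + 1) :: b) = subHat (m + 1) a ++ [1] := by
      simp [subHat_cons_of_lt b (Nat.lt_succ_self _), hb]
    rw [hup, subHat_append, subHat_cons_of_le b le_rfl, hb, List.append_nil]
    exact hf.le_append_one hnonneg (subHat_ne_nil hy (by omega)) (hup ▸ hμ'.subHat _)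
  exact hf.subHat_one_le_sub_append_singleton hnonneg (by simp) (by simp) h h'
    (ih b.length (by simp at hn; omega) a x b ha hμ hμ' rfl)
    (fun k hk => hstep k (by simp at hk; omega)) hlast

end

end LastPartRecursion

theorem stmt8_general
    (d : Nat → Int) (hd0 : d 0 = 1) (hd1 : d 1 = 0)
    (hd : ∀ n : Nat, 2 ≤ n → d n = 2 * ((n : Int) - 1) * (d (n - 1) + d (n - 2)))
    (f : List Nat → Int) (hf0 : f [] = 1) (hf1 : ∀ m : Nat, f [m] = d m)
    (hfr : ∀ l : List Nat, IsPartition l → 2 ≤ l.length →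
      f l = f l.dropLast + ∑ k ∈ Finset.Icc 1 (l.getLastD 0),
        ((l.getLastD 0).choose k : Int) * odf k * f (subHat k l.dropLast))
    (μ : List Nat) (hμ : IsPartition μ)
    (i : Nat) (hi2 : 2 ≤ i) (his : i ≤ μ.length)
    (hlt : μ.getD (i - 1) 0 < μ.getD (i - 2) 0) :
    f (subHat 1 (upAt i μ)) ≤ f (upAt i μ) - f μ ∧ 0 < f (subHat 1 (upAt i μ)) := by
  have hrec := lastPartRecursion_of_dropLast hfr
  have hnonneg := hrec.nonneg (by rw [hf0]; norm_num) fun m =>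
    hf1 m ▸ nonneg_of_recurrence hd0 hd1 hd m
  obtain ⟨a, y, x, b, rfl, ha⟩ := List.exists_eq_append_cons_cons hi2 his
  obtain rfl : i = (a ++ [y]).length + 1 := by simp; omega
  have hxy : x < y := by simpa [List.getD_append_right] using hlt
  have hx : 0 < x := hμ.2 x (by simp)
  have h' : IsPartition ((a ++ [y]) ++ (x + 1) :: b) := by simpa using hμ.raise hxy
  rw [show a ++ y :: x :: b = (a ++ [y]) ++ x :: b by simp] at hμ ⊢
  rw [upAt_append_cons]
  refine ⟨hrec.subHat_one_le_sub hnonneg (a ++ [y]) x b (by simp) hμ h',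
    hrec.pos hnonneg (by rw [hf0]; norm_num) (fun m hm => hf1 m ▸ pos_of_recurrence hd0 hd1 hd hm)
      _ (h'.subHat 1) ?_⟩
  have hne := subHat_ne_nil (List.mem_append_right a (List.mem_singleton_self y))
    (show 1 < y by omega)
  rw [subHat_append, subHat_cons_of_lt _ (show 1 < x + 1 by omega)]
  simp only [ne_eq, List.append_eq_singleton_iff, hne, List.cons_ne_nil, false_and, and_false,
    or_self, not_false_eq_true]

theorem stmt8
    (d : Nat → Int) (hd0 : d 0 = 1) (hd1 : d 1 = 0)
    (hd : ∀ n : Nat, 2 ≤ n → d n = 2 * ((n : Int) - 1) * (d (n - 1) + d (n - 2)))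
    (f : List Nat → Int) (hf0 : f [] = 1) (hf1 : ∀ m : Nat, f [m] = d m)
    (hfr : ∀ l : List Nat, IsPartition l → 2 ≤ l.length →
      f l = f l.dropLast + ∑ k ∈ Finset.Icc 1 (l.getLastD 0),
        ((l.getLastD 0).choose k : Int) * odf k * f (subHat k l.dropLast))
    (μ : List Nat) (hμ : IsPartition μ) (hs : 2 ≤ μ.length)
    (i : Nat) (hi2 : 2 ≤ i) (his : i ≤ μ.length)
    (hlt : μ.getD (i - 1) 0 < μ.getD (i - 2) 0) :
    f (subHat 1 (upAt i μ)) ≤ f (upAt i μ) - f μ ∧ 0 < f (subHat 1 (upAt i μ)) :=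
  stmt8_general d hd0 hd1 hd f hf0 hf1 hfr μ hμ i hi2 his hlt
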